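/- arXiv:1001.2225 — 2 statements merged into one kernel-verified Lean document; each statement's English description precedes it below -/
import Mathlib

section
/- Let r > 0, let S_A and S_B be real 2×2 matrices with det S_A = 1 and det S_B = 1 (2×2 symplectic matrices), and let f, g be real 2×2 matrices with g symmetric. Let σ_AB = (S_A ⊕ S_B) γ_TMSS,r (S_A ⊕ S_B)ᵀ and let σ' = (I₂ ⊕ f) σ_AB (I₂ ⊕ f)ᵀ + (0 ⊕ g) be the output covariance matrix, written in 2×2 blocks σ' = [[α', γ'],[γ'ᵀ, β']]. Then σ' satisfies the separability condition det α' + det β' − 2 det γ' ≤ 4 det σ' + 1/4 if and only if 4 det g ≥ (det f + 1)². -/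
/-!
Local symplectic maps `dsum S T` with `det S = det T = 1` leave `det α`, `det β`, `det γ` and
`det σ` unchanged, and `dsum 1 f * dsum SA SB = dsum SA 1 * dsum 1 (f * SB)`, so we may take
`SA = 1` and replace `f` by `F = f * SB`, which has the same determinant. Then `α = (cosh r / 2) • 1`
is scalar, and the Schur complement gives `4 det σ' = det (cosh r • g + M / 2)` with `M = F * Fᵀ`,
while `det β' = det (g + cosh r • M / 2)`. For 2×2 matrices the difference of these two
determinants is `(cosh² r - 1) (det g - det M / 4)`, and the separability gap
`4 det σ' + 1/4 - (det α' + det β' - 2 det γ')` collapses to `sinh² r / 4 * (4 det g - (det f + 1)²)`.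
-/

open Matrix

/-- Direct sum of two real 2×2 matrices, as a 4×4 (block) matrix. -/
noncomputable def dsum (A B : Matrix (Fin 2) (Fin 2) ℝ) :
    Matrix (Fin 2 ⊕ Fin 2) (Fin 2 ⊕ Fin 2) ℝ :=
  Matrix.fromBlocks A 0 0 B

/-- The Pauli-z matrix σ_z = diag(1, -1). -/
noncomputable def sigmaZ : Matrix (Fin 2) (Fin 2) ℝ := !![1, 0; 0, -1]

/-- Covariance matrix of the two-mode squeezed state with squeezing `r`. -/
noncomputable def tmss (r : ℝ) : Matrix (Fin 2 ⊕ Fin 2) (Fin 2 ⊕ Fin 2) ℝ :=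
  (1/2 : ℝ) • Matrix.fromBlocks
    (Real.cosh r • (1 : Matrix (Fin 2) (Fin 2) ℝ)) (Real.sinh r • sigmaZ)
    (Real.sinh r • sigmaZ) (Real.cosh r • (1 : Matrix (Fin 2) (Fin 2) ℝ))

/-- Separability condition det α + det β − 2 det γ ≤ 4 det σ + 1/4
for a 4×4 covariance matrix σ with blocks [[α, γ],[γᵀ, β]]. -/
def sepCond (σ : Matrix (Fin 2 ⊕ Fin 2) (Fin 2 ⊕ Fin 2) ℝ) : Prop :=
  (σ.toBlocks₁₁).det + (σ.toBlocks₂₂).det - 2 * (σ.toBlocks₁₂).det ≤ 4 * σ.det + 1/4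

theorem Matrix.det_fromBlocks_smul_one₁₁ {n K : Type*} [Fintype n] [DecidableEq n] [Field K]
    {a : K} (ha : a ≠ 0) (B C D : Matrix n n K) :
    (fromBlocks (a • 1) B C D).det = (a • D - C * B).det := by
  let : Invertible (a • (1 : Matrix n n K)) := invertibleOfRightInverse _ (a⁻¹ • 1) (by
    rw [smul_mul_smul_comm, mul_inv_cancel₀ ha, one_mul, one_smul])
  have hinv : ⅟(a • (1 : Matrix n n K)) = a⁻¹ • 1 := rfl
  rw [det_fromBlocks₁₁, hinv, det_smul, det_one, mul_one, ← det_smul, smul_sub,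
    Matrix.mul_smul, Matrix.mul_one, smul_mul, smul_smul, mul_inv_cancel₀ ha, one_smul]

theorem Matrix.det_fin_two_smul_add_smul_sub {R : Type*} [CommRing R] (a b : R)
    (M N : Matrix (Fin 2) (Fin 2) R) :
    (a • M + b • N).det - (b • M + a • N).det = (a ^ 2 - b ^ 2) * (M.det - N.det) := by
  simp only [det_fin_two, add_apply, smul_apply, smul_eq_mul]
  ring

lemma dsum_mul_dsum (A B C D : Matrix (Fin 2) (Fin 2) ℝ) :
    dsum A B * dsum C D = dsum (A * C) (B * D) := by
  simp [dsum, fromBlocks_multiply]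

lemma dsum_transpose (A B : Matrix (Fin 2) (Fin 2) ℝ) : (dsum A B)ᵀ = dsum Aᵀ Bᵀ := by
  simp [dsum, fromBlocks_transpose]

lemma det_dsum (A B : Matrix (Fin 2) (Fin 2) ℝ) : (dsum A B).det = A.det * B.det :=
  det_fromBlocks_zero₂₁ A 0 B

lemma dsum_mul_fromBlocks_mul_dsum_transpose (S T A B C D : Matrix (Fin 2) (Fin 2) ℝ) :
    dsum S T * fromBlocks A B C D * (dsum S T)ᵀ =
      fromBlocks (S * A * Sᵀ) (S * B * Tᵀ) (T * C * Sᵀ) (T * D * Tᵀ) := by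
  simp [dsum, fromBlocks_transpose, fromBlocks_multiply]

lemma sepCond_dsum_conj_iff {S T : Matrix (Fin 2) (Fin 2) ℝ} (hS : S.det = 1) (hT : T.det = 1)
    (σ : Matrix (Fin 2 ⊕ Fin 2) (Fin 2 ⊕ Fin 2) ℝ) :
    sepCond (dsum S T * σ * (dsum S T)ᵀ) ↔ sepCond σ := by
  have hdet : (dsum S T * σ * (dsum S T)ᵀ).det = σ.det := by
    rw [det_mul, det_mul, det_transpose, det_dsum, hS, hT]; ring
  rw [sepCond, sepCond, hdet, ← fromBlocks_toBlocks σ, dsum_mul_fromBlocks_mul_dsum_transpose]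
  simp only [toBlocks_fromBlocks₁₁, toBlocks_fromBlocks₁₂, toBlocks_fromBlocks₂₂, det_mul,
    det_transpose, hS, hT, one_mul, mul_one]

lemma sigmaZ_mul_self : sigmaZ * sigmaZ = 1 := by
  simp [sigmaZ, ← Matrix.ext_iff, Fin.forall_fin_two]

lemma det_sigmaZ : sigmaZ.det = -1 := by
  simp [sigmaZ, det_fin_two_of]

lemma dsum_one_mul_tmss_mul_transpose_add_dsum_zero (r : ℝ) (F g : Matrix (Fin 2) (Fin 2) ℝ) :
    dsum 1 F * tmss r * (dsum 1 F)ᵀ + dsum 0 g =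
      fromBlocks ((Real.cosh r / 2) • 1) ((Real.sinh r / 2) • (sigmaZ * Fᵀ))
        ((Real.sinh r / 2) • (F * sigmaZ)) ((Real.cosh r / 2) • (F * Fᵀ) + g) := by
  simp only [dsum, tmss, fromBlocks_transpose, fromBlocks_smul, fromBlocks_multiply,
    fromBlocks_add, transpose_one, transpose_zero, Matrix.mul_smul, Matrix.smul_mul,
    Matrix.one_mul, Matrix.mul_one, Matrix.zero_mul, Matrix.mul_zero, smul_smul, smul_zero,
    add_zero, zero_add]
  congr 1 <;> ring_nf

lemma sepCond_channel_tmss_iff {r : ℝ} (hr : 0 < r) (F g : Matrix (Fin 2) (Fin 2) ℝ) :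
    sepCond (dsum 1 F * tmss r * (dsum 1 F)ᵀ + dsum 0 g) ↔ 4 * g.det ≥ (F.det + 1) ^ 2 := by
  set c := Real.cosh r
  set s := Real.sinh r
  have hcs : c ^ 2 - s ^ 2 = 1 := Real.cosh_sq_sub_sinh_sq r
  have hs : 0 < s := Real.sinh_pos_iff.mpr hr
  set M := F * Fᵀ
  set N := (1 / 2 : ℝ) • M
  have hschur : (c / 2) • ((c / 2) • M + g) - ((s / 2) • (F * sigmaZ)) * ((s / 2) • (sigmaZ * Fᵀ))
      = (1 / 2 : ℝ) • (c • g + (1 : ℝ) • N) := by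
    have : F * sigmaZ * (sigmaZ * Fᵀ) = M := by
      rw [Matrix.mul_assoc, ← Matrix.mul_assoc sigmaZ, sigmaZ_mul_self, Matrix.one_mul]
    rw [smul_mul_smul_comm, this]
    linear_combination (norm := module) (1 / 4 : ℝ) • hcs • M
  have hα : ((c / 2) • (1 : Matrix (Fin 2) (Fin 2) ℝ)).det = c ^ 2 / 4 := by
    rw [det_smul, det_one, Fintype.card_fin]; ring
  have hβ : (c / 2) • M + g = (1 : ℝ) • g + c • N := by module
  have hγ : ((s / 2) • (sigmaZ * Fᵀ)).det = -(s ^ 2 / 4) * F.det := by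
    rw [det_smul, det_mul, det_sigmaZ, det_transpose, Fintype.card_fin]; ring
  have hN : N.det = F.det ^ 2 / 4 := by
    rw [det_smul, det_mul, det_transpose, Fintype.card_fin]; ring
  have hswap := det_fin_two_smul_add_smul_sub c 1 g N
  have gap : 4 * ((1 / 2 : ℝ) • (c • g + (1 : ℝ) • N)).det + 1 / 4
      - (c ^ 2 / 4 + ((1 : ℝ) • g + c • N).det - 2 * (-(s ^ 2 / 4) * F.det))
      = s ^ 2 / 4 * (4 * g.det - (F.det + 1) ^ 2) := by
    rw [hN] at hswap
    rw [det_smul, Fintype.card_fin]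
    linear_combination hswap + (g.det - F.det ^ 2 / 4 - 1 / 4) * hcs
  rw [dsum_one_mul_tmss_mul_transpose_add_dsum_zero, sepCond, toBlocks_fromBlocks₁₁,
    toBlocks_fromBlocks₁₂, toBlocks_fromBlocks₂₂, det_fromBlocks_smul_one₁₁ (by positivity),
    hschur, hα, hβ, hγ, ← sub_nonneg, gap, mul_nonneg_iff_of_pos_left (by positivity), sub_nonneg,
    ge_iff_le]

lemma dsum_one_mul_dsum_mul_transpose_mul_add_dsum_zero (SA SB f g : Matrix (Fin 2) (Fin 2) ℝ)
    (σ : Matrix (Fin 2 ⊕ Fin 2) (Fin 2 ⊕ Fin 2) ℝ) :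
    dsum 1 f * (dsum SA SB * σ * (dsum SA SB)ᵀ) * (dsum 1 f)ᵀ + dsum 0 g =
      dsum SA 1 * (dsum 1 (f * SB) * σ * (dsum 1 (f * SB))ᵀ + dsum 0 g) * (dsum SA 1)ᵀ := by
  have hfactor : dsum 1 f * dsum SA SB = dsum SA 1 * dsum 1 (f * SB) := by
    simp only [dsum_mul_dsum, Matrix.one_mul, Matrix.mul_one]
  have hnoise : dsum SA 1 * dsum 0 g * (dsum SA 1)ᵀ = dsum 0 g := by
    simp only [dsum_transpose, dsum_mul_dsum, Matrix.mul_zero, Matrix.zero_mul, Matrix.one_mul,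
      transpose_one, Matrix.mul_one]
  rw [Matrix.mul_add, Matrix.add_mul, hnoise, add_left_inj]
  calc dsum 1 f * (dsum SA SB * σ * (dsum SA SB)ᵀ) * (dsum 1 f)ᵀ
      = dsum 1 f * dsum SA SB * σ * (dsum 1 f * dsum SA SB)ᵀ := by
        simp only [transpose_mul, Matrix.mul_assoc]
    _ = _ := by rw [hfactor]; simp only [transpose_mul, Matrix.mul_assoc]

theorem stmt0_general (r : ℝ) (hr : 0 < r)
    (SA SB f g : Matrix (Fin 2) (Fin 2) ℝ)
    (hSA : SA.det = 1) (hSB : SB.det = 1) :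
    sepCond (dsum 1 f * (dsum SA SB * tmss r * (dsum SA SB)ᵀ) * (dsum 1 f)ᵀ + dsum 0 g)
      ↔ 4 * g.det ≥ (f.det + 1) ^ 2 := by
  rw [dsum_one_mul_dsum_mul_transpose_mul_add_dsum_zero, sepCond_dsum_conj_iff hSA det_one,
    sepCond_channel_tmss_iff hr, det_mul, hSB, mul_one]

theorem stmt0 (r : ℝ) (hr : 0 < r)
    (SA SB f g : Matrix (Fin 2) (Fin 2) ℝ)
    (hSA : SA.det = 1) (hSB : SB.det = 1) (hg : g.IsSymm) :
    sepCond (dsum 1 f * (dsum SA SB * tmss r * (dsum SA SB)ᵀ) * (dsum 1 f)ᵀ + dsum 0 g)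
      ↔ 4 * g.det ≥ (f.det + 1) ^ 2 :=
  stmt0_general r hr SA SB f g hSA hSB
end

section
/- Let r > 0, let f be an invertible real 2×2 matrix, let S_B be a real 2×2 matrix with det S_B = 1, and let g be a real symmetric 2×2 matrix. Set h = (f S_B)⁻¹ g ((f S_B)⁻¹)ᵀ, C = (cosh(r)/2) I₂ and S = (sinh(r)/2) σ_z. Then h is symmetric, det g = (det f)² det h, and the output matrix σ' = (I₂ ⊕ f S_B) γ_TMSS,r (I₂ ⊕ f S_B)ᵀ + (0 ⊕ g), with blocks [[α', γ'],[γ'ᵀ, β']], satisfies det α' + det β' − 2 det γ' ≤ 4 det σ' + 1/4 if and only if det C + (det f)² det(C + h) − 2 (det f) det S ≤ 4 (det f)² det( γ_TMSS,r + (0 ⊕ h) ) + 1/4. -/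
open Matrix

/-- Physicality (Robertson–Schrödinger) condition det α + det β + 2 det γ ≤ 4 det σ + 1/4
for a 4×4 covariance matrix σ with blocks [[α, γ],[γᵀ, β]]. -/
def physCond (σ : Matrix (Fin 2 ⊕ Fin 2) (Fin 2 ⊕ Fin 2) ℝ) : Prop :=
  (σ.toBlocks₁₁).det + (σ.toBlocks₂₂).det + 2 * (σ.toBlocks₁₂).det ≤ 4 * σ.det + 1/4

/-!
With `F = f * SB` (so `det F = det f`), the output state is the congruence of `tmss r + (0 ⊕ h)`
by `I₂ ⊕ F`, because `F h Fᵀ = g`. This congruence keeps the block `α`, sends `γ` to `γ Fᵀ` and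
`β` to `F β Fᵀ`, so it multiplies `det γ` by `det F` and both `det β` and `det σ` by `(det F)²`.
-/

section Congruence

variable {m n R : Type*} [Fintype n] [CommRing R]

theorem Matrix.IsSymm.mul_mul_transpose {B : Matrix n n R} (hB : B.IsSymm) (A : Matrix m n R) :
    (A * B * Aᵀ).IsSymm := by
  rw [IsSymm, transpose_mul, transpose_mul, transpose_transpose, hB.eq, Matrix.mul_assoc]

theorem Matrix.det_mul_mul_transpose [DecidableEq n] (A M : Matrix n n R) :
    (A * M * Aᵀ).det = A.det ^ 2 * M.det := by
  rw [det_mul, det_mul, det_transpose]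
  ring

theorem Matrix.mul_inv_congr_mul_transpose [DecidableEq n] {A : Matrix n n R} (hA : IsUnit A.det)
    (g : Matrix n n R) : A * (A⁻¹ * g * A⁻¹ᵀ) * Aᵀ = g := by
  have hAinv : A⁻¹ᵀ * Aᵀ = 1 := by
    rw [← transpose_mul, mul_nonsing_inv A hA, transpose_one]
  calc A * (A⁻¹ * g * A⁻¹ᵀ) * Aᵀ = (A * A⁻¹) * g * (A⁻¹ᵀ * Aᵀ) := by noncomm_ring
    _ = g := by rw [mul_nonsing_inv A hA, hAinv, Matrix.one_mul, Matrix.mul_one]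

theorem Matrix.fromBlocks_one_zero_zero_congr [Fintype m] [DecidableEq m]
    (F : Matrix n n R) (A : Matrix m m R) (B : Matrix m n R) (C : Matrix n m R)
    (D : Matrix n n R) :
    fromBlocks 1 0 0 F * fromBlocks A B C D * (fromBlocks 1 0 0 F)ᵀ =
      fromBlocks A (B * Fᵀ) (F * C) (F * D * Fᵀ) := by
  simp [fromBlocks_transpose, fromBlocks_multiply]

end Congruence

theorem det_dsum_one (F : Matrix (Fin 2) (Fin 2) ℝ) : (dsum 1 F).det = F.det := by
  rw [dsum, det_fromBlocks_zero₂₁, det_one, one_mul]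

theorem tmss_add_dsum_zero (r : ℝ) (h : Matrix (Fin 2) (Fin 2) ℝ) :
    tmss r + dsum 0 h =
      fromBlocks ((Real.cosh r / 2) • 1) ((Real.sinh r / 2) • sigmaZ)
        ((Real.sinh r / 2) • sigmaZ) ((Real.cosh r / 2) • 1 + h) := by
  rw [tmss, dsum, fromBlocks_smul, fromBlocks_add]
  simp only [smul_smul, add_zero]
  norm_num [div_eq_inv_mul]

theorem sepCond_dsum_one_congr_iff (F A B C D : Matrix (Fin 2) (Fin 2) ℝ) :
    sepCond (dsum 1 F * fromBlocks A B C D * (dsum 1 F)ᵀ) ↔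
      A.det + F.det ^ 2 * D.det - 2 * F.det * B.det ≤
        4 * F.det ^ 2 * (fromBlocks A B C D).det + 1/4 := by
  have hσdet := det_mul_mul_transpose (dsum 1 F) (fromBlocks A B C D)
  rw [sepCond, hσdet, det_dsum_one, dsum, fromBlocks_one_zero_zero_congr,
    toBlocks_fromBlocks₁₁, toBlocks_fromBlocks₂₂, toBlocks_fromBlocks₁₂,
    det_mul_mul_transpose, det_mul, det_transpose, mul_comm B.det]
  simp only [mul_assoc]

theorem stmt11_general (r : ℝ)
    (f SB g : Matrix (Fin 2) (Fin 2) ℝ) (hf : f.det ≠ 0) (hSB : SB.det = 1) (hg : g.IsSymm) :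
    ((f * SB)⁻¹ * g * ((f * SB)⁻¹)ᵀ).IsSymm ∧
    g.det = f.det ^ 2 * ((f * SB)⁻¹ * g * ((f * SB)⁻¹)ᵀ).det ∧
    (sepCond (dsum 1 (f * SB) * tmss r * (dsum 1 (f * SB))ᵀ + dsum 0 g) ↔
      ((Real.cosh r / 2) • (1 : Matrix (Fin 2) (Fin 2) ℝ)).det +
          f.det ^ 2 * ((Real.cosh r / 2) • (1 : Matrix (Fin 2) (Fin 2) ℝ)
            + (f * SB)⁻¹ * g * ((f * SB)⁻¹)ᵀ).det -
          2 * f.det * ((Real.sinh r / 2) • sigmaZ).det ≤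
        4 * f.det ^ 2 * (tmss r + dsum 0 ((f * SB)⁻¹ * g * ((f * SB)⁻¹)ᵀ)).det + 1/4) := by
  set F := f * SB
  set h := F⁻¹ * g * F⁻¹ᵀ
  have hFdet : F.det = f.det := by rw [det_mul, hSB, mul_one]
  have hg_eq : F * h * Fᵀ = g :=
    mul_inv_congr_mul_transpose (hFdet ▸ hf.isUnit) g
  have hσ : dsum 1 F * tmss r * (dsum 1 F)ᵀ + dsum 0 g =
      dsum 1 F * (tmss r + dsum 0 h) * (dsum 1 F)ᵀ := by
    simp [Matrix.mul_add, Matrix.add_mul, dsum, fromBlocks_one_zero_zero_congr, hg_eq]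
  refine ⟨hg.mul_mul_transpose _, by rw [← hg_eq, det_mul_mul_transpose, hFdet], ?_⟩
  rw [hσ, tmss_add_dsum_zero, sepCond_dsum_one_congr_iff, hFdet]

theorem stmt11 (r : ℝ) (hr : 0 < r)
    (f SB g : Matrix (Fin 2) (Fin 2) ℝ) (hf : f.det ≠ 0) (hSB : SB.det = 1) (hg : g.IsSymm) :
    ((f * SB)⁻¹ * g * ((f * SB)⁻¹)ᵀ).IsSymm ∧
    g.det = f.det ^ 2 * ((f * SB)⁻¹ * g * ((f * SB)⁻¹)ᵀ).det ∧
    (sepCond (dsum 1 (f * SB) * tmss r * (dsum 1 (f * SB))ᵀ + dsum 0 g) ↔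
      ((Real.cosh r / 2) • (1 : Matrix (Fin 2) (Fin 2) ℝ)).det +
          f.det ^ 2 * ((Real.cosh r / 2) • (1 : Matrix (Fin 2) (Fin 2) ℝ)
            + (f * SB)⁻¹ * g * ((f * SB)⁻¹)ᵀ).det -
          2 * f.det * ((Real.sinh r / 2) • sigmaZ).det ≤
        4 * f.det ^ 2 * (tmss r + dsum 0 ((f * SB)⁻¹ * g * ((f * SB)⁻¹)ᵀ)).det + 1/4) :=
  stmt11_general r f SB g hf hSB hg
end
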